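/- Modulus of continuity for a power of the Fraenkel asymmetry: for n ≥ 2 and measurable sets E, E' ⊂ ℝⁿ of positive finite measure, | |E| D(E)^{n/(n−1)} − |E'| D(E')^{n/(n−1)} | ≤ 2^{n/(n−1)} · (n+1)/(n−1) · |E Δ E'|. -/

import Mathlib

open MeasureTheory Metric Set

/-- The Fraenkel asymmetry of a measurable set `E ⊆ ℝⁿ`. -/
noncomputable def fraenkelAsymmetry {n : ℕ} (E : Set (EuclideanSpace ℝ (Fin n))) : ℝ :=
  sInf {t : ℝ | ∃ (x : EuclideanSpace ℝ (Fin n)) (r : ℝ),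
    volume (ball x r) = volume E ∧
    t = (volume (symmDiff E (ball x r))).toReal / (volume E).toReal}

/-!
Moving an optimal ball for `E` concentrically until its volume is `|E'|` costs
`||E| - |E'|| ≤ |E ∆ E'|`, so `|E| D(E)` changes by at most `2 |E ∆ E'|`. The power
`p = n / (n - 1) > 1` is then handled by the tangent-line inequality
`D ^ p - D' ^ p ≤ p D ^ (p - 1) (D - D')` together with `D ≤ 2`, which gives the constant
`2 ^ p (2 p - 1) = 2 ^ p (n + 1) / (n - 1)`.
-/

open scoped symmDiff ENNReal

namespace Real

theorem rpow_sub_rpow_le_mul_rpow_sub_one_mul_sub {x y p : ℝ} (hx : 0 < x) (hy : 0 ≤ y)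
    (hp : 1 ≤ p) : x ^ p - y ^ p ≤ p * x ^ (p - 1) * (x - y) := by
  have hbern := one_add_mul_self_le_rpow_one_add
    (by linarith [div_nonneg hy hx.le] : (-1 : ℝ) ≤ y / x - 1) hp
  rw [add_sub_cancel, div_rpow hy hx.le, le_div_iff₀ (rpow_pos_of_pos hx p)] at hbern
  have hrhs : p * x ^ (p - 1) * (x - y) = -(p * (y / x - 1) * x ^ p) := by
    rw [rpow_sub_one hx.ne']
    field_simp
    ring
  linarith

end Real

theorem mul_rpow_sub_mul_rpow_le {p m m' D D' δ : ℝ} (hp : 1 < p) (hm' : 0 ≤ m') (hD : 0 ≤ D)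
    (hD₂ : D ≤ 2) (hD' : 0 ≤ D') (hδ : 0 ≤ δ) (hmD : m * D ≤ m' * D' + 2 * δ)
    (hmm' : m' ≤ m + δ) : m * D ^ p - m' * D' ^ p ≤ 2 ^ p * (2 * p - 1) * δ := by
  rcases hD.eq_or_lt with rfl | hD₀
  · have hRHS : 0 ≤ 2 ^ p * (2 * p - 1) * δ := by
      have : 0 ≤ 2 * p - 1 := by linarith
      positivity
    rw [Real.zero_rpow (by linarith), mul_zero, zero_sub]
    linarith [mul_nonneg hm' (Real.rpow_nonneg hD' p)]
  have htangent := Real.rpow_sub_rpow_le_mul_rpow_sub_one_mul_sub hD₀ hD' hp.le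
  have hDp : D ^ (p - 1) * D = D ^ p := by
    rw [Real.rpow_sub_one hD₀.ne', div_mul_cancel₀ _ hD₀.ne']
  have h2p : (2 : ℝ) ^ (p - 1) * 2 = 2 ^ p := by
    rw [Real.rpow_sub_one two_ne_zero, div_mul_cancel₀ _ two_ne_zero]
  calc m * D ^ p - m' * D' ^ p = (m - m') * D ^ p + m' * (D ^ p - D' ^ p) := by ring
    _ ≤ (m - m') * D ^ p + m' * (p * D ^ (p - 1) * (D - D')) := by gcongr
    _ = (m - m') * D ^ p + p * D ^ (p - 1) * (m' * D - m' * D') := by ring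
    _ ≤ (m - m') * D ^ p + p * D ^ (p - 1) * (m' * D - m * D + 2 * δ) := by
        gcongr
        linarith
    _ = (p - 1) * D ^ p * (m' - m) + 2 * p * D ^ (p - 1) * δ := by rw [← hDp]; ring
    _ ≤ (p - 1) * D ^ p * δ + 2 * p * D ^ (p - 1) * δ := by gcongr; linarith
    _ ≤ (p - 1) * 2 ^ p * δ + 2 * p * 2 ^ (p - 1) * δ := by gcongr
    _ = 2 ^ p * (2 * p - 1) * δ := by rw [← h2p]; ring

theorem abs_mul_rpow_sub_mul_rpow_le {p m m' D D' δ : ℝ} (hp : 1 < p) (hm : 0 ≤ m)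
    (hm' : 0 ≤ m') (hD : 0 ≤ D) (hD₂ : D ≤ 2) (hD' : 0 ≤ D') (hD'₂ : D' ≤ 2) (hδ : 0 ≤ δ)
    (hmD : m * D ≤ m' * D' + 2 * δ) (hmD' : m' * D' ≤ m * D + 2 * δ) (hmm' : |m - m'| ≤ δ) :
    |m * D ^ p - m' * D' ^ p| ≤ 2 ^ p * (2 * p - 1) * δ := by
  obtain ⟨hmm'₁, hmm'₂⟩ := abs_sub_le_iff.1 hmm'
  exact abs_sub_le_iff.2
    ⟨mul_rpow_sub_mul_rpow_le hp hm' hD hD₂ hD' hδ hmD (by linarith),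
      mul_rpow_sub_mul_rpow_le hp hm hD' hD'₂ hD hδ hmD' (by linarith)⟩

theorem exists_measure_ball_eq {E : Type*} [NormedAddCommGroup E] [NormedSpace ℝ E]
    [MeasurableSpace E] [BorelSpace E] [FiniteDimensional ℝ E] [Nontrivial E]
    (μ : Measure E) [μ.IsAddHaarMeasure] (x : E) {v : ℝ≥0∞} (hv : v ≠ ∞) :
    ∃ r, μ (ball x r) = v := by
  set c := μ (ball 0 1)
  have hc : 0 < c.toReal :=
    ENNReal.toReal_pos (measure_ball_pos μ 0 one_pos).ne' measure_ball_lt_top.ne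
  have hd : (Module.finrank ℝ E : ℝ) ≠ 0 := by exact_mod_cast Module.finrank_pos.ne'
  have hvc : 0 ≤ v.toReal / c.toReal := div_nonneg ENNReal.toReal_nonneg hc.le
  refine ⟨(v.toReal / c.toReal) ^ (Module.finrank ℝ E : ℝ)⁻¹, ?_⟩
  rw [Measure.addHaar_ball μ x (Real.rpow_nonneg hvc _), ← Real.rpow_natCast,
    ← Real.rpow_mul hvc, inv_mul_cancel₀ hd, Real.rpow_one,
    ← ENNReal.ofReal_toReal measure_ball_lt_top.ne, ← ENNReal.ofReal_mul hvc,
    div_mul_cancel₀ _ hc.ne', ENNReal.ofReal_toReal hv]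

theorem measureReal_ball_symmDiff_ball {X : Type*} [PseudoMetricSpace X] [MeasurableSpace X]
    [OpensMeasurableSpace X] (μ : Measure X) (x : X) {r r' : ℝ} (h : μ (ball x r) ≠ ∞)
    (h' : μ (ball x r') ≠ ∞) :
    μ.real (ball x r ∆ ball x r') = |μ.real (ball x r) - μ.real (ball x r')| := by
  wlog hr : r ≤ r' generalizing r r'
  · rw [symmDiff_comm, abs_sub_comm]
    exact this h' h (le_of_not_ge hr)
  have hsub := ball_subset_ball (x := x) hr
  rw [symmDiff_of_le hsub, measureReal_sdiff hsub measurableSet_ball h', abs_sub_comm,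
    abs_of_nonneg (sub_nonneg.2 (measureReal_mono hsub h'))]

theorem abs_measureReal_sub_le_measureReal_symmDiff_of_ne_top {α : Type*} [MeasurableSpace α]
    {μ : Measure α} {s t : Set α} (hs : μ s ≠ ∞) (ht : μ t ≠ ∞) :
    |μ.real s - μ.real t| ≤ μ.real (s ∆ t) := by
  have hst := measure_symmDiff_ne_top hs ht
  exact abs_sub_le_iff.2
    ⟨(le_measureReal_sdiff ht).trans (measureReal_mono le_sup_left hst),
      (le_measureReal_sdiff hs).trans (measureReal_mono le_sup_right hst)⟩

section FraenkelAsymmetry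

variable {n : ℕ} {E E' : Set (EuclideanSpace ℝ (Fin n))}

theorem fraenkelAsymmetry_nonneg (E : Set (EuclideanSpace ℝ (Fin n))) :
    0 ≤ fraenkelAsymmetry E :=
  Real.sInf_nonneg <| by
    rintro t ⟨x, r, -, rfl⟩
    exact div_nonneg ENNReal.toReal_nonneg ENNReal.toReal_nonneg

theorem fraenkelAsymmetry_le_of_volume_ball_eq {x : EuclideanSpace ℝ (Fin n)} {r : ℝ}
    (h : volume (ball x r) = volume E) :
    fraenkelAsymmetry E ≤ volume.real (E ∆ ball x r) / volume.real E :=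
  csInf_le ⟨0, by
    rintro t ⟨x, r, -, rfl⟩
    exact div_nonneg ENNReal.toReal_nonneg ENNReal.toReal_nonneg⟩ ⟨x, r, h, rfl⟩

theorem measureReal_mul_fraenkelAsymmetry_le_of_volume_ball_eq {x : EuclideanSpace ℝ (Fin n)}
    {r : ℝ} (h : volume (ball x r) = volume E) :
    volume.real E * fraenkelAsymmetry E ≤ volume.real (E ∆ ball x r) := by
  rw [mul_comm]
  exact mul_le_of_le_div₀ measureReal_nonneg measureReal_nonneg
    (fraenkelAsymmetry_le_of_volume_ball_eq h)

variable [NeZero n]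

theorem le_fraenkelAsymmetry (hE : volume E ≠ ∞) {c : ℝ}
    (h : ∀ x r, volume (ball x r) = volume E →
      c ≤ volume.real (E ∆ ball x r) / volume.real E) :
    c ≤ fraenkelAsymmetry E := by
  obtain ⟨r, hr⟩ := exists_measure_ball_eq volume (0 : EuclideanSpace ℝ (Fin n)) hE
  exact le_csInf ⟨_, 0, r, hr, rfl⟩ (by rintro t ⟨x, r, hr, rfl⟩; exact h x r hr)

theorem fraenkelAsymmetry_le_two (hE : volume E ≠ ∞) : fraenkelAsymmetry E ≤ 2 := by
  obtain ⟨r, hr⟩ := exists_measure_ball_eq volume (0 : EuclideanSpace ℝ (Fin n)) hE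
  have hB : volume.real (ball (0 : EuclideanSpace ℝ (Fin n)) r) = volume.real E := by
    simp only [Measure.real, hr]
  refine (fraenkelAsymmetry_le_of_volume_ball_eq hr).trans <|
    div_le_of_le_mul₀ measureReal_nonneg zero_le_two ?_
  calc volume.real (E ∆ ball 0 r) ≤ volume.real E + volume.real (ball 0 r) :=
        (measureReal_mono symmDiff_subset_union (measure_union_ne_top hE (hr ▸ hE))).trans
          (measureReal_union_le _ _)
    _ = 2 * volume.real E := by rw [hB, two_mul]

theorem measureReal_mul_fraenkelAsymmetry_le (hE₀ : volume E ≠ 0) (hE : volume E ≠ ∞)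
    (hE' : volume E' ≠ ∞) :
    volume.real E' * fraenkelAsymmetry E' ≤
      volume.real E * fraenkelAsymmetry E + 2 * volume.real (E ∆ E') := by
  have hm : 0 < volume.real E := ENNReal.toReal_pos hE₀ hE
  suffices (volume.real E' * fraenkelAsymmetry E' - 2 * volume.real (E ∆ E')) / volume.real E ≤
      fraenkelAsymmetry E by
    rw [div_le_iff₀ hm] at this
    linarith
  refine le_fraenkelAsymmetry hE fun x r hr ↦ div_le_div_of_nonneg_right ?_ hm.le
  obtain ⟨r', hr'⟩ := exists_measure_ball_eq volume x hE'
  have hball : volume.real (ball x r ∆ ball x r') ≤ volume.real (E ∆ E') := by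
    rw [measureReal_ball_symmDiff_ball volume x (hr ▸ hE) (hr' ▸ hE')]
    simp only [Measure.real, hr, hr']
    exact abs_measureReal_sub_le_measureReal_symmDiff_of_ne_top hE hE'
  have h₁ := measureReal_symmDiff_le (μ := volume) (s := E') (ball x r') hE' hE
  have h₂ := measureReal_symmDiff_le (μ := volume) (t := ball x r) (ball x r') hE (hr ▸ hE)
  rw [symmDiff_comm E' E] at h₁
  linarith [measureReal_mul_fraenkelAsymmetry_le_of_volume_ball_eq hr']

end FraenkelAsymmetry

theorem abs_measure_mul_fraenkel_rpow_sub_le_general {n : ℕ} (hn : 2 ≤ n)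
    (E E' : Set (EuclideanSpace ℝ (Fin n)))
    (h0 : 0 < volume E) (hfin : volume E < ⊤)
    (h0' : 0 < volume E') (hfin' : volume E' < ⊤) :
    |(volume E).toReal * fraenkelAsymmetry E ^ ((n : ℝ) / ((n : ℝ) - 1)) -
      (volume E').toReal * fraenkelAsymmetry E' ^ ((n : ℝ) / ((n : ℝ) - 1))| ≤
      (2 : ℝ) ^ ((n : ℝ) / ((n : ℝ) - 1)) * (((n : ℝ) + 1) / ((n : ℝ) - 1)) *
        (volume (symmDiff E E')).toReal := by
  have : NeZero n := ⟨by omega⟩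
  have hn' : (2 : ℝ) ≤ n := by exact_mod_cast hn
  have hp : 1 < (n : ℝ) / (n - 1) := (one_lt_div (by linarith)).2 (by linarith)
  have hconst : ((n : ℝ) + 1) / (n - 1) = 2 * ((n : ℝ) / (n - 1)) - 1 := by
    field_simp [show (n : ℝ) - 1 ≠ 0 by linarith]
    ring
  rw [hconst]
  have hmD' := measureReal_mul_fraenkelAsymmetry_le h0'.ne' hfin'.ne hfin.ne
  rw [symmDiff_comm] at hmD'
  exact abs_mul_rpow_sub_mul_rpow_le hp measureReal_nonneg measureReal_nonneg
    (fraenkelAsymmetry_nonneg E) (fraenkelAsymmetry_le_two hfin.ne)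
    (fraenkelAsymmetry_nonneg E') (fraenkelAsymmetry_le_two hfin'.ne) measureReal_nonneg hmD'
    (measureReal_mul_fraenkelAsymmetry_le h0.ne' hfin.ne hfin'.ne)
    (abs_measureReal_sub_le_measureReal_symmDiff_of_ne_top hfin.ne hfin'.ne)

/-- Modulus of continuity for the `n/(n-1)` power of the Fraenkel asymmetry:
`| |E| D(E)^{n/(n−1)} − |E'| D(E')^{n/(n−1)} | ≤ 2^{n/(n−1)} (n+1)/(n−1) |E Δ E'|`. -/
theorem abs_measure_mul_fraenkel_rpow_sub_le {n : ℕ} (hn : 2 ≤ n)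
    (E E' : Set (EuclideanSpace ℝ (Fin n)))
    (hE : MeasurableSet E) (hE' : MeasurableSet E')
    (h0 : 0 < volume E) (hfin : volume E < ⊤)
    (h0' : 0 < volume E') (hfin' : volume E' < ⊤) :
    |(volume E).toReal * fraenkelAsymmetry E ^ ((n : ℝ) / ((n : ℝ) - 1)) -
      (volume E').toReal * fraenkelAsymmetry E' ^ ((n : ℝ) / ((n : ℝ) - 1))| ≤
      (2 : ℝ) ^ ((n : ℝ) / ((n : ℝ) - 1)) * (((n : ℝ) + 1) / ((n : ℝ) - 1)) *
        (volume (symmDiff E E')).toReal :=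
  abs_measure_mul_fraenkel_rpow_sub_le_general hn E E' h0 hfin h0' hfin'
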